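/- The largest eigenvalue μ of the Laplacian matrix of the graph G strictly exceeds max over all pairs of adjacent vertices v ~ j of 2 + √(3·(m_v² + m_j²) − 2·m_v·m_j − 4·(d_v + d_j) + 4). (This gives a counterexample to conjectured bound 43 of Brankov, Hansen and Stevanović.) -/

import Mathlib

/-- The edge list of the graph. -/
def edgeList : List (Fin 12 × Fin 12) :=
  [(0,3),(0,4),(0,8),(1,2),(1,3),(1,8),(1,10),(2,5),(2,7),(2,11),(3,7),(3,11),(4,6),(4,7),(5,8),(5,9),(6,9),(6,10),(7,10),(9,11),(10,11)]

/-- The graph under consideration. -/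
def G : SimpleGraph (Fin 12) where
  Adj v w := (v, w) ∈ edgeList ∨ (w, v) ∈ edgeList
  symm := ⟨fun _ _ h => h.symm⟩
  loopless := ⟨by intro v; fin_cases v <;> decide⟩

instance : DecidableRel G.Adj :=
  fun v w => inferInstanceAs (Decidable ((v, w) ∈ edgeList ∨ (w, v) ∈ edgeList))

/-- `d v` is the degree of the vertex `v`, as a real number. -/
noncomputable def d (v : Fin 12) : ℝ := G.degree v

/-- `m v` is the average of the degrees of the neighbours of `v`. -/
noncomputable def m (v : Fin 12) : ℝ :=
  (∑ u ∈ G.neighborFinset v, (G.degree u : ℝ)) / d v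

/-- Test vector for the Rayleigh quotient. -/
noncomputable def xtest : Fin 12 → ℝ := ![2,5,-5,-5,-2,2,2,5,-2,-2,-5,5]

lemma xtest_dot : dotProduct xtest xtest = 174 := by
  simp [dotProduct, Fin.sum_univ_succ, xtest]
  norm_num

lemma xtest_quad : dotProduct xtest ((G.lapMatrix ℝ).mulVec xtest) = 1290 := by
  rw [← Matrix.toLinearMap₂'_apply', SimpleGraph.lapMatrix_toLinearMap₂']
  simp only [Fin.sum_univ_succ, Fin.sum_univ_zero]
  simp (config := { decide := true }) only [xtest]
  simp only [Fin.reduceFinMk, Fin.succ, Fin.val_two, Matrix.cons_val]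
  norm_num

lemma deg_values : ∀ v : Fin 12, G.degree v = [3,4,4,4,3,3,3,4,3,3,4,4].get v := by decide

lemma sum_values : ∀ v : Fin 12,
    (∑ u ∈ G.neighborFinset v, G.degree u) = [10,15,15,15,10,10,10,15,10,10,15,15].get v := by
  decide

lemma md_values : ∀ v : Fin 12, (m v = 10/3 ∧ d v = 3) ∨ (m v = 15/4 ∧ d v = 4) := by
  intro v
  have hm : m v = ((∑ u ∈ G.neighborFinset v, G.degree u : ℕ) : ℝ) / ((G.degree v : ℕ) : ℝ) := by
    rw [m, d, Nat.cast_sum]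
  have hd : d v = ((G.degree v : ℕ) : ℝ) := rfl
  fin_cases v <;> rw [hm, hd, sum_values, deg_values] <;> norm_num [List.get]

theorem laplacian_spectral_radius_exceeds_bound (μ : ℝ)
    (hmem : μ ∈ spectrum ℝ (G.lapMatrix ℝ))
    (hmax : ∀ ν ∈ spectrum ℝ (G.lapMatrix ℝ), ν ≤ μ) :
    (Finset.univ.filter fun p : _ × _ => G.Adj p.1 p.2).sup' (by decide)
      (fun p => 2 + Real.sqrt (3 * (m p.1 ^ 2 + m p.2 ^ 2) - 2 * m p.1 * m p.2 - 4 * (d p.1 + d p.2) + 4)) < μ := by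
  -- the matrix μ • 1 - L is Hermitian
  have hH : (G.lapMatrix ℝ).IsHermitian := (SimpleGraph.posSemidef_lapMatrix ℝ G).1
  set M : Matrix (Fin 12) (Fin 12) ℝ := μ • (1 : Matrix (Fin 12) (Fin 12) ℝ) - G.lapMatrix ℝ with hMdef
  have hM : M.IsHermitian := by
    have h1 : (μ • (1 : Matrix (Fin 12) (Fin 12) ℝ)).IsHermitian := by
      simp [Matrix.IsHermitian, Matrix.conjTranspose_smul]
    exact h1.sub hH
  -- its eigenvalues are nonnegative since all eigenvalues of L are at most μ
  have hnn : ∀ i, (0:ℝ) ≤ hM.eigenvalues i := by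
    intro i
    have h1 := hM.eigenvalues_mem_spectrum_real i
    have h2 : μ - hM.eigenvalues i ∈ spectrum ℝ (G.lapMatrix ℝ) := by
      rw [spectrum.mem_iff] at h1 ⊢
      intro hu
      apply h1
      have hneg := hu.neg
      convert hneg using 1
      simp only [Algebra.algebraMap_eq_smul_one, hMdef]
      module
    have := hmax _ h2
    linarith
  have hpsd : M.PosSemidef := hM.posSemidef_iff_eigenvalues_nonneg.mpr hnn
  -- Rayleigh quotient lower bound: μ ≥ 1290/174 = 215/29
  have hmu : (215/29 : ℝ) ≤ μ := by
    have h3 := hpsd.dotProduct_mulVec_nonneg xtest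
    simp only [hMdef, Matrix.sub_mulVec, Matrix.smul_mulVec, Matrix.one_mulVec,
      dotProduct_sub, dotProduct_smul, smul_eq_mul, star_trivial] at h3
    rw [xtest_dot, xtest_quad] at h3
    linarith
  -- each term of the sup is at most 2 + √(113/4) < 215/29 ≤ μ
  have hkey : ∀ c : ℝ, c ≤ 113/4 → 2 + Real.sqrt c < μ := by
    intro c hc
    have h1 : Real.sqrt c ≤ Real.sqrt (113/4) := Real.sqrt_le_sqrt hc
    have h2 : Real.sqrt (113/4) < 157/29 := by
      rw [show (157/29:ℝ) = Real.sqrt ((157/29)^2) from (Real.sqrt_sq (by norm_num)).symm]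
      exact Real.sqrt_lt_sqrt (by norm_num) (by norm_num)
    linarith
  rw [Finset.sup'_lt_iff]
  intro p _
  rcases md_values p.1 with ⟨h1, h1'⟩ | ⟨h1, h1'⟩ <;>
    rcases md_values p.2 with ⟨h2, h2'⟩ | ⟨h2, h2'⟩ <;>
    · rw [h1, h1', h2, h2']
      exact hkey _ (by norm_num)
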